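/- Let n ≥ 3 and let A be the n-dimensional complex (non-associative, commutative) algebra with basis {e_1,…,e_n} and multiplication e_i · e_i = e_{i+1} for 1 ≤ i ≤ n-1, with e_i · e_j = 0 for i ≠ j. Then every local automorphism of A is an automorphism of A. -/

import Mathlib

section
variable {n : ℕ} {A : Type*} [NonUnitalNonAssocRing A] [Module ℂ A]
  [SMulCommClass ℂ A A] [IsScalarTower ℂ A A]
  (e : Module.Basis (Fin n) ℂ A)

theorem aux_mul (hne : ∀ i j : Fin n, i ≠ j → e i * e j = 0) (x y : A) :
    x * y = ∑ i : Fin n, (e.repr x i * e.repr y i) • (e i * e i) := by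
  conv_lhs => rw [← e.sum_repr x, ← e.sum_repr y]
  rw [Finset.sum_mul_sum]
  refine Finset.sum_congr rfl fun i _ => ?_
  rw [Finset.sum_eq_single i]
  · rw [smul_mul_smul_comm]
  · intro j _ hji
    rw [smul_mul_smul_comm, hne i j (Ne.symm hji), smul_zero]
  · intro h; exact absurd (Finset.mem_univ i) h

theorem aux_repr_zero (hn : 3 ≤ n)
    (hsq : ∀ i : Fin n, ∀ h : (i : ℕ) + 1 < n, e i * e i = e ⟨(i : ℕ) + 1, h⟩)
    (hlast : e ⟨n - 1, Nat.sub_one_lt (by omega)⟩ * e ⟨n - 1, Nat.sub_one_lt (by omega)⟩ = 0)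
    (hne : ∀ i j : Fin n, i ≠ j → e i * e j = 0) (x y : A) :
    e.repr (x * y) ⟨0, by omega⟩ = 0 := by
  rw [aux_mul e hne x y, map_sum, Finsupp.coe_finset_sum, Finset.sum_apply]
  refine Finset.sum_eq_zero fun i _ => ?_
  rw [map_smul, Finsupp.smul_apply]
  by_cases h : (i : ℕ) + 1 < n
  · rw [hsq i h, e.repr_self, Finsupp.single_apply, if_neg (by simp [Fin.ext_iff]), smul_zero]
  · have : i = ⟨n - 1, Nat.sub_one_lt (by omega)⟩ := by ext; simp only []; omega
    rw [this, hlast, map_zero, Finsupp.coe_zero, Pi.zero_apply, smul_zero]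

theorem aux_reprS (hn : 3 ≤ n)
    (hsq : ∀ i : Fin n, ∀ h : (i : ℕ) + 1 < n, e i * e i = e ⟨(i : ℕ) + 1, h⟩)
    (hlast : e ⟨n - 1, Nat.sub_one_lt (by omega)⟩ * e ⟨n - 1, Nat.sub_one_lt (by omega)⟩ = 0)
    (hne : ∀ i j : Fin n, i ≠ j → e i * e j = 0) (m : ℕ) (h : m + 1 < n) (x y : A) :
    e.repr (x * y) ⟨m + 1, h⟩
      = e.repr x ⟨m, by omega⟩ * e.repr y ⟨m, by omega⟩ := by
  rw [aux_mul e hne x y, map_sum, Finsupp.coe_finset_sum, Finset.sum_apply]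
  rw [Finset.sum_eq_single (⟨m, by omega⟩ : Fin n)]
  · rw [map_smul, Finsupp.smul_apply, hsq ⟨m, by omega⟩ h, e.repr_self,
      Finsupp.single_apply, if_pos rfl, smul_eq_mul, mul_one]
  · intro i _ him
    rw [map_smul, Finsupp.smul_apply]
    by_cases hi : (i : ℕ) + 1 < n
    · have him' : (i : ℕ) ≠ m := fun hc => him (Fin.ext hc)
      rw [hsq i hi, e.repr_self, Finsupp.single_apply, if_neg, smul_zero]
      simp only [Fin.mk.injEq]
      omega
    · have : i = ⟨n - 1, Nat.sub_one_lt (by omega)⟩ := by ext; simp only []; omega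
      rw [this, hlast, map_zero, Finsupp.coe_zero, Pi.zero_apply, smul_zero]
  · intro h'; exact absurd (Finset.mem_univ _) h'

theorem aux_classify (hn : 3 ≤ n)
    (hsq : ∀ i : Fin n, ∀ h : (i : ℕ) + 1 < n, e i * e i = e ⟨(i : ℕ) + 1, h⟩)
    (hlast : e ⟨n - 1, Nat.sub_one_lt (by omega)⟩ * e ⟨n - 1, Nat.sub_one_lt (by omega)⟩ = 0)
    (hne : ∀ i j : Fin n, i ≠ j → e i * e j = 0)
    (φ : A ≃ₗ[ℂ] A) (hmul : ∀ y z : A, φ (y * z) = φ y * φ z) :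
    ∃ t s : ℂ, t ≠ 0 ∧
      φ (e ⟨0, by omega⟩) = t • e ⟨0, by omega⟩ + s • e ⟨n - 1, Nat.sub_one_lt (by omega)⟩ ∧
      ∀ j : ℕ, 1 ≤ j → ∀ hj : j < n, φ (e ⟨j, hj⟩) = (t ^ 2 ^ j) • e ⟨j, hj⟩ := by
  set t : ℂ := e.repr (φ (e ⟨0, by omega⟩)) ⟨0, by omega⟩ with htdef
  set s : ℂ := e.repr (φ (e ⟨0, by omega⟩)) ⟨n - 1, Nat.sub_one_lt (by omega)⟩ with hsdef
  -- Step A : images of e_j, j ≥ 1, have zero coefficient at index 0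
  have hA : ∀ j : ℕ, 1 ≤ j → ∀ hj : j < n,
      e.repr (φ (e ⟨j, hj⟩)) ⟨0, by omega⟩ = 0 := by
    intro j h1 hj
    obtain ⟨m, rfl⟩ : ∃ m, j = m + 1 := ⟨j - 1, by omega⟩
    have hs : e (⟨m, by omega⟩ : Fin n) * e ⟨m, by omega⟩ = e ⟨m + 1, hj⟩ :=
      hsq ⟨m, by omega⟩ hj
    rw [← hs, hmul, aux_repr_zero e hn hsq hlast hne]
  -- Step B : t ≠ 0
  have ht : t ≠ 0 := by
    intro ht0
    have key : ∀ x : A, e.repr (φ x) ⟨0, by omega⟩ = 0 := by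
      intro x
      conv_lhs => rw [← e.sum_repr x]
      rw [map_sum, map_sum, Finsupp.coe_finset_sum, Finset.sum_apply]
      refine Finset.sum_eq_zero fun j _ => ?_
      rw [map_smul, map_smul, Finsupp.smul_apply]
      rcases Nat.eq_zero_or_pos (j : ℕ) with h | h
      · have hj0 : j = ⟨0, by omega⟩ := Fin.ext h
        rw [hj0, ← htdef, ht0, smul_zero]
      · have := hA j h j.isLt
        rw [Fin.eta] at this
        rw [this, smul_zero]
    have hcon := key (φ.symm (e ⟨0, by omega⟩))
    rw [LinearEquiv.apply_symm_apply, e.repr_self] at hcon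
    rw [Finsupp.single_apply, if_pos rfl] at hcon
    exact one_ne_zero hcon
  -- Step D : diagonal entries
  have hD : ∀ j : ℕ, ∀ hj : j < n,
      e.repr (φ (e ⟨j, hj⟩)) ⟨j, hj⟩ = t ^ 2 ^ j := by
    intro j
    induction j with
    | zero => intro hj; rw [pow_zero, pow_one]
    | succ j ih =>
      intro hj
      have hjn : j < n := by omega
      have hs : e (⟨j, hjn⟩ : Fin n) * e ⟨j, hjn⟩ = e ⟨j + 1, hj⟩ := hsq _ hj
      rw [← hs, hmul, aux_reprS e hn hsq hlast hne j hj, ih hjn, ← pow_add]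
      congr 1
      ring
  -- Step F : off-diagonal entries of column 0 vanish (rows 1..n-2)
  have hF : ∀ m : ℕ, 1 ≤ m → ∀ h : m + 1 < n,
      e.repr (φ (e ⟨0, by omega⟩)) ⟨m, by omega⟩ = 0 := by
    intro m h1 h
    have hz : φ (e ⟨0, by omega⟩) * φ (e ⟨m, by omega⟩) = 0 := by
      rw [← hmul, hne _ _ (by simp only [ne_eq, Fin.mk.injEq]; omega), map_zero]
    have h2 := aux_reprS e hn hsq hlast hne m h (φ (e ⟨0, by omega⟩)) (φ (e ⟨m, by omega⟩))
    rw [hz, map_zero, Finsupp.coe_zero, Pi.zero_apply] at h2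
    rcases mul_eq_zero.mp h2.symm with h' | h'
    · exact h'
    · exact absurd ((hD m (by omega)).symm.trans h') (pow_ne_zero _ ht)
  -- Step G : the image of e_0
  have hG : φ (e ⟨0, by omega⟩) = t • e ⟨0, by omega⟩ + s • e ⟨n - 1, Nat.sub_one_lt (by omega)⟩ := by
    refine e.ext_elem fun k => ?_
    rw [map_add, map_smul, map_smul, e.repr_self, e.repr_self, Finsupp.add_apply,
      Finsupp.smul_apply, Finsupp.smul_apply, Finsupp.single_apply, Finsupp.single_apply]
    rcases k with ⟨k, hk⟩
    by_cases hk0 : k = 0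
    · subst hk0
      rw [if_pos rfl, if_neg (by simp only [Fin.mk.injEq]; omega), smul_zero, add_zero,
        smul_eq_mul, mul_one]
    · by_cases hkn : k = n - 1
      · subst hkn
        rw [if_neg (by simp only [Fin.mk.injEq]; omega), if_pos rfl, smul_zero, zero_add,
          smul_eq_mul, mul_one]
      · rw [if_neg (by simp only [Fin.mk.injEq]; omega),
          if_neg (by simp only [Fin.mk.injEq]; omega), smul_zero, smul_zero, add_zero]
        exact hF k (by omega) (by omega)
  -- Step I : images of the other basis vectors
  have hI : ∀ j : ℕ, 1 ≤ j → ∀ hj : j < n,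
      φ (e ⟨j, hj⟩) = (t ^ 2 ^ j) • e ⟨j, hj⟩ := by
    intro j h1
    induction j, h1 using Nat.le_induction with
    | base =>
      intro hj
      have hs : e (⟨0, by omega⟩ : Fin n) * e ⟨0, by omega⟩ = e ⟨1, hj⟩ := hsq _ hj
      rw [← hs, hmul, hG, mul_add, add_mul, add_mul, smul_mul_smul_comm, smul_mul_smul_comm,
        smul_mul_smul_comm, smul_mul_smul_comm, hs, hlast,
        hne (⟨0, by omega⟩ : Fin n) ⟨n - 1, Nat.sub_one_lt (by omega)⟩ (by simp only [ne_eq, Fin.mk.injEq]; omega),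
        hne (⟨n - 1, Nat.sub_one_lt (by omega)⟩ : Fin n) ⟨0, by omega⟩ (by simp only [ne_eq, Fin.mk.injEq]; omega),
        smul_zero, smul_zero, smul_zero, add_zero, add_zero, add_zero]
      congr 1
      ring
    | succ j h1 ih =>
      intro hj
      have hjn : j < n := by omega
      have hs : e (⟨j, hjn⟩ : Fin n) * e ⟨j, hjn⟩ = e ⟨j + 1, hj⟩ := hsq _ hj
      rw [← hs, hmul, ih hjn, smul_mul_smul_comm, hs, ← pow_add]
      congr 2
      ring
  exact ⟨t, s, ht, hG, hI⟩

end


/-- On the `n`-dimensional complex commutative non-associative algebra (`n ≥ 3`)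
with basis `e_1, …, e_n` and multiplication `e_i · e_i = e_{i+1}` for `i ≤ n - 1`,
`e_i · e_j = 0` for `i ≠ j` (and `e_n · e_n = 0`), every local automorphism is an
automorphism. Here the basis is indexed by `Fin n`, with `e_i` at index `i - 1`. -/
theorem stmt_9 (n : ℕ) (hn : 3 ≤ n)
    (A : Type*) [NonUnitalNonAssocRing A] [Module ℂ A]
    [SMulCommClass ℂ A A] [IsScalarTower ℂ A A]
    (e : Module.Basis (Fin n) ℂ A)
    (hsq : ∀ i : Fin n, ∀ h : (i : ℕ) + 1 < n, e i * e i = e ⟨(i : ℕ) + 1, h⟩)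
    (hlast : e ⟨n - 1, by omega⟩ * e ⟨n - 1, by omega⟩ = 0)
    (hne : ∀ i j : Fin n, i ≠ j → e i * e j = 0)
    (T : A →ₗ[ℂ] A)
    (hT : ∀ x : A, ∃ φ : A ≃ₗ[ℂ] A,
      (∀ y z : A, φ (y * z) = φ y * φ z) ∧ T x = φ x) :
    Function.Bijective T ∧ ∀ x y : A, T (x * y) = T x * T y := by
  have rv : ∀ (c : ℂ) (i k : Fin n), e.repr (c • e i) k = if i = k then c else 0 := by
    intro c i k
    rw [map_smul, e.repr_self, Finsupp.smul_apply, Finsupp.single_apply]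
    split <;> simp
  obtain ⟨φ1, hm1, hx1⟩ := hT (e ⟨0, by omega⟩)
  obtain ⟨t, s, ht, hG1, hI1⟩ := aux_classify e hn hsq hlast hne φ1 hm1
  have hTj : ∀ j : ℕ, 1 ≤ j → ∀ hj : j < n,
      ∃ u : ℂ, u ≠ 0 ∧ T (e ⟨j, hj⟩) = u • e ⟨j, hj⟩ := by
    intro j h1 hj
    obtain ⟨φ, hm, hx⟩ := hT (e ⟨j, hj⟩)
    obtain ⟨t', s', ht', hG', hI'⟩ := aux_classify e hn hsq hlast hne φ hm
    exact ⟨t' ^ 2 ^ j, pow_ne_zero _ ht', by rw [hx, hI' j h1 hj]⟩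
  -- middle indices
  have hmid : ∀ j : ℕ, 1 ≤ j → ∀ hj : j + 1 < n,
      T (e ⟨j, by omega⟩) = (t ^ 2 ^ j) • e ⟨j, by omega⟩ := by
    intro j h1 hj
    obtain ⟨u, hu, hTu⟩ := hTj j h1 (by omega)
    obtain ⟨φ, hm, hx⟩ := hT (e ⟨0, by omega⟩ + e ⟨j, by omega⟩)
    obtain ⟨t', s', ht', hG', hI'⟩ := aux_classify e hn hsq hlast hne φ hm
    rw [map_add, map_add, hx1, hG1, hTu, hG', hI' j h1 (by omega)] at hx
    have e1 : n - 1 ≠ 0 := by omega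
    have e2 : j ≠ 0 := by omega
    have e3 : n - 1 ≠ j := by omega
    have e4 : j ≠ n - 1 := by omega
    have e5 : (0 : ℕ) ≠ j := by omega
    have e6 : (0 : ℕ) ≠ n - 1 := by omega
    have c0 := congrArg (fun z => e.repr z ⟨0, by omega⟩) hx
    simp only [map_add, Finsupp.add_apply, rv, Fin.mk.injEq, e1, e2, e3, e4, e5, e6,
      if_true, if_false, ite_true, ite_false, add_zero, zero_add, if_pos rfl] at c0
    have cj := congrArg (fun z => e.repr z ⟨j, by omega⟩) hx
    simp only [map_add, Finsupp.add_apply, rv, Fin.mk.injEq, e1, e2, e3, e4, e5, e6,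
      if_true, if_false, ite_true, ite_false, add_zero, zero_add, if_pos rfl] at cj
    rw [hTu, cj, ← c0]
  -- last index
  have hlastT : T (e ⟨n - 1, by omega⟩) = (t ^ 2 ^ (n - 1)) • e ⟨n - 1, by omega⟩ := by
    have hmid1 := hmid 1 le_rfl (by omega)
    obtain ⟨u, hu, hTu⟩ := hTj (n - 1) (by omega) (by omega)
    obtain ⟨φ, hm, hx⟩ := hT (e ⟨1, by omega⟩ + e ⟨n - 1, by omega⟩)
    obtain ⟨t', s', ht', hG', hI'⟩ := aux_classify e hn hsq hlast hne φ hm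
    rw [map_add, map_add, hmid1, hTu, hI' 1 le_rfl (by omega),
      hI' (n - 1) (by omega) (by omega)] at hx
    have e1 : (1 : ℕ) ≠ n - 1 := by omega
    have e2 : n - 1 ≠ 1 := by omega
    have c1 := congrArg (fun z => e.repr z ⟨1, by omega⟩) hx
    simp only [map_add, Finsupp.add_apply, rv, Fin.mk.injEq, e1, e2,
      if_true, if_false, ite_true, ite_false, add_zero, zero_add, if_pos rfl] at c1
    have cN := congrArg (fun z => e.repr z ⟨n - 1, by omega⟩) hx
    simp only [map_add, Finsupp.add_apply, rv, Fin.mk.injEq, e1, e2,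
      if_true, if_false, ite_true, ite_false, add_zero, zero_add, if_pos rfl] at cN
    have hsplit : ∀ c : ℂ, c ^ 2 ^ (n - 1) = (c ^ 2 ^ 1) ^ 2 ^ (n - 2) := by
      intro c
      rw [← pow_mul]
      congr 1
      have hn1 : n - 1 = (n - 2) + 1 := by omega
      rw [hn1, pow_succ]
      ring
    rw [hTu, cN, hsplit, ← c1, ← hsplit]
  -- T agrees with φ1 on the basis
  have hTeq : ∀ i : Fin n, T (e i) = φ1 (e i) := by
    intro ⟨i, hi⟩
    rcases Nat.eq_zero_or_pos i with h | h
    · subst h; exact hx1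
    · by_cases hi' : i = n - 1
      · subst hi'
        exact hlastT.trans (hI1 (n - 1) (by omega) hi).symm
      · exact (hmid i h (by omega)).trans (hI1 i h hi).symm
  have hTφ : T = (φ1 : A →ₗ[ℂ] A) := e.ext fun i => hTeq i
  constructor
  · rw [hTφ]; exact φ1.bijective
  · intro x y
    rw [hTφ]
    simp only [LinearEquiv.coe_coe]
    exact hm1 x y
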